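/- arXiv:math/0301348 — 3 statements merged into one kernel-verified Lean document; each statement's English description precedes it below -/
import Mathlib

section
/- Let K be a group and θ : K → K an injective group homomorphism, and let G = K*_θ be the associated HNN extension. Then the canonical image of K in G is co-amenable in G. -/
/-- The space ℓ∞(X) of bounded real-valued functions on `X`,
as a submodule of `X → ℝ`. -/
def BddFns (X : Type*) : Submodule ℝ (X → ℝ) where
  carrier := {f | ∃ C : ℝ, ∀ x, |f x| ≤ C}
  add_mem' := by
    rintro f g ⟨C, hC⟩ ⟨D, hD⟩
    exact ⟨C + D, fun x => (abs_add_le _ _).trans (add_le_add (hC x) (hD x))⟩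
  zero_mem' := ⟨0, fun x => by simp⟩
  smul_mem' := by
    rintro c f ⟨C, hC⟩
    exact ⟨|c| * C, fun x => by
      simp only [Pi.smul_apply, smul_eq_mul, abs_mul]
      exact mul_le_mul_of_nonneg_left (hC x) (abs_nonneg c)⟩

/-- Left translation of a function on a `G`-set: `(g · f)(x) = f (g⁻¹ • x)`. -/
def lshift {G X : Type*} [Group G] [MulAction G X] (g : G) (f : X → ℝ) : X → ℝ :=
  fun x => f (g⁻¹ • x)

lemma lshift_mem {G X : Type*} [Group G] [MulAction G X] (g : G) {f : X → ℝ}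
    (hf : f ∈ BddFns X) : lshift g f ∈ BddFns X := by
  obtain ⟨C, hC⟩ := hf
  exact ⟨C, fun x => hC _⟩

/-- A `G`-invariant mean on ℓ∞(X): a linear functional `m` with `m 1 = 1`,
`m f ≥ 0` for `f ≥ 0` pointwise, invariant under the `G`-action. -/
structure InvariantMean (G : Type*) (X : Type*) [Group G] [MulAction G X] where
  toFun : (BddFns X) →ₗ[ℝ] ℝ
  norm_one : toFun ⟨(fun _ => 1), ⟨1, fun _ => by norm_num⟩⟩ = 1
  nonneg : ∀ f : BddFns X, (∀ x, 0 ≤ (f : X → ℝ) x) → 0 ≤ toFun f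
  invariant : ∀ (g : G) (f : BddFns X),
    toFun ⟨lshift g (f : X → ℝ), lshift_mem g f.2⟩ = toFun f

/-- A subgroup `H ≤ G` is co-amenable in `G` if there is a `G`-invariant mean
on ℓ∞(G/H), where `G/H` is the left coset space. -/
def Subgroup.Coamenable {G : Type*} [Group G] (H : Subgroup G) : Prop :=
  Nonempty (InvariantMean G (G ⧸ H))

/-- A group is amenable if there is a left-translation-invariant mean on ℓ∞(G). -/
def AmenableGroup (G : Type*) [Group G] : Prop :=
  Nonempty (InvariantMean G G)

/-! Since `t K t⁻¹ ⊆ K`, every coset `t⁻ⁿK` with `n ≥ 0` is fixed by `K`, while `t⁻¹` moves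
`t⁻ⁿK` to `t⁻⁽ⁿ⁺¹⁾K`. Pulling functions on `G/K` back along `n ↦ t⁻ⁿK` and applying a
Banach limit (an ultrafilter limit of Cesàro averages, which is shift invariant) therefore gives
a mean on `ℓ∞(G/K)` invariant under `K` and `t`, hence under the group `G` they generate. -/

open Filter Topology Finset
open scoped BigOperators

namespace BddFns

variable {X Y : Type*}

lemma const_mem (c : ℝ) : (fun _ : X => c) ∈ BddFns X :=
  ⟨|c|, fun _ => le_rfl⟩

lemma comp_mem {f : X → ℝ} (hf : f ∈ BddFns X) (u : Y → X) : f ∘ u ∈ BddFns Y := by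
  obtain ⟨C, hC⟩ := hf
  exact ⟨C, fun y => hC (u y)⟩

def comp (u : Y → X) : BddFns X →ₗ[ℝ] BddFns Y where
  toFun f := ⟨f ∘ u, comp_mem f.2 u⟩
  map_add' _ _ := rfl
  map_smul' _ _ := rfl

@[simp]
lemma comp_apply (u : Y → X) (f : BddFns X) (y : Y) :
    (comp u f : Y → ℝ) y = (f : X → ℝ) (u y) :=
  rfl

lemma exists_tendsto_ultrafilter (𝒰 : Ultrafilter X) (f : BddFns X) :
    ∃ c, Tendsto (f : X → ℝ) 𝒰 (𝓝 c) := by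
  obtain ⟨C, hC⟩ := f.2
  have hmaps : Tendsto (f : X → ℝ) 𝒰 (𝓟 (Set.Icc (-C) C)) :=
    tendsto_principal.2 (Eventually.of_forall fun x => abs_le.1 (hC x))
  obtain ⟨c, -, hc⟩ := isCompact_Icc.ultrafilter_le_nhds (𝒰.map (f : X → ℝ)) hmaps
  exact ⟨c, hc⟩

end BddFns

section Ultralimit

variable {ι : Type*} (𝒰 : Ultrafilter ι)

noncomputable def ultralim : BddFns ι →ₗ[ℝ] ℝ where
  toFun f := limUnder (𝒰 : Filter ι) f
  map_add' f g :=
    ((tendsto_nhds_limUnder (BddFns.exists_tendsto_ultrafilter 𝒰 f)).add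
      (tendsto_nhds_limUnder (BddFns.exists_tendsto_ultrafilter 𝒰 g))).limUnder_eq
  map_smul' c f :=
    ((tendsto_nhds_limUnder (BddFns.exists_tendsto_ultrafilter 𝒰 f)).const_mul c).limUnder_eq

lemma tendsto_ultralim (f : BddFns ι) : Tendsto (f : ι → ℝ) 𝒰 (𝓝 (ultralim 𝒰 f)) :=
  tendsto_nhds_limUnder (BddFns.exists_tendsto_ultrafilter 𝒰 f)

lemma ultralim_eq_of_tendsto {f : BddFns ι} {c : ℝ} (h : Tendsto (f : ι → ℝ) 𝒰 (𝓝 c)) :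
    ultralim 𝒰 f = c :=
  h.limUnder_eq

lemma ultralim_nonneg {f : BddFns ι} (hf : ∀ i, 0 ≤ (f : ι → ℝ) i) : 0 ≤ ultralim 𝒰 f :=
  ge_of_tendsto' (tendsto_ultralim 𝒰 f) hf

end Ultralimit

lemma cesaro_mem {f : ℕ → ℝ} (hf : f ∈ BddFns ℕ) :
    (fun n => 𝔼 k ∈ range (n + 1), f k) ∈ BddFns ℕ := by
  obtain ⟨C, hC⟩ := hf
  exact ⟨C, fun n => (abs_expect_le _ _).trans (expect_le nonempty_range_add_one fun k _ => hC k)⟩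

noncomputable def cesaro : BddFns ℕ →ₗ[ℝ] BddFns ℕ where
  toFun f := ⟨fun n => 𝔼 k ∈ range (n + 1), (f : ℕ → ℝ) k, cesaro_mem f.2⟩
  map_add' _ _ := Subtype.ext <| funext fun _ => expect_add_distrib _ _ _
  map_smul' _ _ := Subtype.ext <| funext fun _ => (mul_expect _ _ _).symm

@[simp]
lemma cesaro_apply (f : BddFns ℕ) (n : ℕ) :
    (cesaro f : ℕ → ℝ) n = 𝔼 k ∈ range (n + 1), (f : ℕ → ℝ) k := rfl

lemma cesaro_comp_succ_sub (f : BddFns ℕ) (n : ℕ) :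
    (cesaro (BddFns.comp Nat.succ f) : ℕ → ℝ) n - (cesaro f : ℕ → ℝ) n
      = ((f : ℕ → ℝ) (n + 1) - (f : ℕ → ℝ) 0) / (n + 1) := by
  rw [cesaro_apply, cesaro_apply, ← expect_sub_distrib, expect_eq_sum_div_card, card_range]
  simp only [BddFns.comp_apply, Nat.succ_eq_add_one, sum_range_sub, Nat.cast_add_one]

lemma tendsto_cesaro_comp_succ_sub (f : BddFns ℕ) :
    Tendsto (fun n => (cesaro (BddFns.comp Nat.succ f) : ℕ → ℝ) n - (cesaro f : ℕ → ℝ) n)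
      atTop (𝓝 0) := by
  obtain ⟨C, hC⟩ := f.2
  simp only [cesaro_comp_succ_sub]
  refine squeeze_zero_norm (fun n => ?_)
    ((tendsto_const_div_atTop_nhds_zero_nat (2 * C)).comp (tendsto_add_atTop_nat 1))
  rw [Real.norm_eq_abs, abs_div, Function.comp_apply, Nat.cast_add_one,
    abs_of_pos (Nat.cast_add_one_pos (α := ℝ) n)]
  gcongr
  exact (abs_sub _ _).trans (by linarith [hC (n + 1), hC 0])

noncomputable def banachLimit : BddFns ℕ →ₗ[ℝ] ℝ :=
  ultralim (hyperfilter ℕ) ∘ₗ cesaro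

lemma banachLimit_const_one : banachLimit ⟨fun _ => 1, BddFns.const_mem 1⟩ = 1 :=
  ultralim_eq_of_tendsto _ <| tendsto_const_nhds.congr fun _ => by simp

lemma banachLimit_nonneg {f : BddFns ℕ} (hf : ∀ n, 0 ≤ (f : ℕ → ℝ) n) : 0 ≤ banachLimit f :=
  ultralim_nonneg _ fun _ => expect_nonneg fun k _ => hf k

lemma banachLimit_comp_succ (f : BddFns ℕ) :
    banachLimit (BddFns.comp Nat.succ f) = banachLimit f := by
  rw [← sub_eq_zero, banachLimit, ← LinearMap.map_sub, LinearMap.comp_apply, LinearMap.map_sub]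
  exact ultralim_eq_of_tendsto _
    ((tendsto_cesaro_comp_succ_sub f).mono_left Nat.hyperfilter_le_atTop)

section OrbitMean

variable {G X : Type*} [Group G] [MulAction G X]

lemma lshift_one (f : X → ℝ) : lshift (1 : G) f = f :=
  funext fun x => by simp [lshift]

lemma lshift_mul (a b : G) (f : X → ℝ) : lshift (a * b) f = lshift a (lshift b f) :=
  funext fun x => by simp [lshift, mul_smul]

variable (G) in
def invariantSubgroup (m : BddFns X →ₗ[ℝ] ℝ) : Subgroup G where
  carrier := {g | ∀ f : BddFns X, m ⟨lshift g f, lshift_mem g f.2⟩ = m f}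
  one_mem' f := congrArg m (Subtype.ext (lshift_one _))
  mul_mem' {a b} ha hb f :=
    calc m ⟨lshift (a * b) f, lshift_mem (a * b) f.2⟩
        = m ⟨lshift a (lshift b f), lshift_mem a (lshift_mem b f.2)⟩ :=
          congrArg m (Subtype.ext (lshift_mul a b (f : X → ℝ)))
      _ = m f := (ha _).trans (hb f)
  inv_mem' {a} ha f :=
    calc m ⟨lshift a⁻¹ f, lshift_mem a⁻¹ f.2⟩
        = m ⟨lshift a (lshift a⁻¹ f), lshift_mem a (lshift_mem a⁻¹ f.2)⟩ := (ha _).symm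
      _ = m f := congrArg m <| Subtype.ext <|
        (lshift_mul a a⁻¹ (f : X → ℝ)).symm.trans (by rw [mul_inv_cancel, lshift_one])

lemma mem_invariantSubgroup {m : BddFns X →ₗ[ℝ] ℝ} {g : G} :
    g ∈ invariantSubgroup G m ↔ ∀ f : BddFns X, m ⟨lshift g f, lshift_mem g f.2⟩ = m f :=
  Iff.rfl

noncomputable def orbitMean (s : G) (x : X) : BddFns X →ₗ[ℝ] ℝ :=
  banachLimit ∘ₗ BddFns.comp (fun n : ℕ => s ^ n • x)

lemma inv_mem_invariantSubgroup_orbitMean (s : G) (x : X) :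
    s⁻¹ ∈ invariantSubgroup G (orbitMean s x) := mem_invariantSubgroup.2 fun f =>
  (congrArg banachLimit (Subtype.ext (funext fun n => by simp [lshift, pow_succ', mul_smul]))).trans
    (banachLimit_comp_succ _)

lemma mem_invariantSubgroup_orbitMean {s g : G} {x : X} (hg : ∀ n : ℕ, g • s ^ n • x = s ^ n • x) :
    g ∈ invariantSubgroup G (orbitMean s x) := mem_invariantSubgroup.2 fun f =>
  congrArg banachLimit (Subtype.ext (funext fun n => by
    simp only [BddFns.comp_apply, lshift, inv_smul_eq_iff.2 (hg n).symm]))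

theorem nonempty_invariantMean_of_fix_orbit (s : G) (x : X) {S : Set G}
    (hS : ∀ g ∈ S, ∀ n : ℕ, g • s ^ n • x = s ^ n • x) (hgen : Subgroup.closure (insert s S) = ⊤) :
    Nonempty (InvariantMean G X) := by
  have hinv : ⊤ ≤ invariantSubgroup G (orbitMean s x) := hgen ▸ (Subgroup.closure_le _).2
    (Set.insert_subset_iff.2 ⟨inv_mem_iff.1 (inv_mem_invariantSubgroup_orbitMean s x),
      fun g hg => mem_invariantSubgroup_orbitMean (hS g hg)⟩)
  exact ⟨{ toFun := orbitMean s x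
           norm_one := banachLimit_const_one
           nonneg := fun _ hf => banachLimit_nonneg fun _ => hf _
           invariant := fun g => mem_invariantSubgroup.1 (hinv (Subgroup.mem_top g)) }⟩

end OrbitMean

namespace HNNExtension

variable {G : Type*} [Group G] {B : Subgroup G}

lemma closure_insert_t_inv_range_of {A : Subgroup G} {φ : A ≃* B} :
    Subgroup.closure (insert t⁻¹ (Set.range (of : G →* HNNExtension G A B φ))) = ⊤ := by
  refine (Subgroup.eq_top_iff' _).2 fun g => ?_
  induction g using HNNExtension.induction_on with
  | of g => exact Subgroup.subset_closure (Set.mem_insert_of_mem _ ⟨g, rfl⟩)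
  | t => exact inv_mem_iff.1 (Subgroup.subset_closure (Set.mem_insert _ _))
  | mul _ _ ha hb => exact mul_mem ha hb
  | inv _ ha => exact inv_mem ha

variable {φ : (⊤ : Subgroup G) ≃* B}

local notation "Γ" => HNNExtension G ⊤ B φ

lemma t_pow_mul_of_mul_inv_mem_range_of (n : ℕ) (g : G) :
    (t ^ n * of g * (t ^ n)⁻¹ : Γ) ∈ of.range := by
  induction n generalizing g with
  | zero => simp
  | succ n ih =>
    have hconj : (t ^ (n + 1) * of g * (t ^ (n + 1))⁻¹ : Γ)
        = t ^ n * of (φ ⟨g, trivial⟩ : G) * (t ^ n)⁻¹ := by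
      rw [equiv_eq_conj]; group
    exact hconj ▸ ih _

lemma of_smul_t_inv_pow_smul_coe_one (g : G) (n : ℕ) :
    (of g : Γ) • (t⁻¹ ^ n : Γ) • ((1 : Γ) : Γ ⧸ (of : G →* Γ).range)
      = (t⁻¹ ^ n : Γ) • ((1 : Γ) : Γ ⧸ (of : G →* Γ).range) := by
  simp only [MulAction.Quotient.smul_coe, smul_eq_mul, mul_one, QuotientGroup.eq]
  have hconj : ((of g : Γ) * t⁻¹ ^ n)⁻¹ * t⁻¹ ^ n
      = t ^ n * of g⁻¹ * (t ^ n)⁻¹ := by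
    rw [map_inv, inv_pow]; group
  exact hconj ▸ t_pow_mul_of_mul_inv_mem_range_of n g⁻¹

end HNNExtension

/-- For any group `K` and injective endomorphism `θ : K → K`, the canonical image
of `K` in the HNN extension `K*_θ = ⟨K, t | t k t⁻¹ = θ(k)⟩` is co-amenable. -/
theorem hnn_base_coamenable {K : Type*} [Group K] (θ : K →* K)
    (hθ : Function.Injective θ) :
    (HNNExtension.of.range :
      Subgroup (HNNExtension K ⊤ θ.range
        (Subgroup.topEquiv.trans (MonoidHom.ofInjective hθ)))).Coamenable := by
  refine nonempty_invariantMean_of_fix_orbit HNNExtension.t⁻¹ (QuotientGroup.mk 1) ?_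
    HNNExtension.closure_insert_t_inv_range_of
  rintro _ ⟨k, rfl⟩
  exact HNNExtension.of_smul_t_inv_pow_smul_coe_one k
end

section
/- Let Q be any group and let G = Q ≀ ℤ be the restricted wreath product, i.e., the semidirect product of ℤ acting on the restricted direct product ⊕_{n∈ℤ} Q by shifting indices. Then the subgroup K = ⊕_{n≥0} Q consisting of finitely supported functions vanishing at all negative indices is co-amenable in G. -/
open Function

/-- The restricted direct product `⊕_{i ∈ I} Q`: functions `I → Q` equal to `1`
outside a finite set, as a subgroup of `I → Q`. -/
def restrictedProd (I : Type*) (Q : Type*) [Group Q] : Subgroup (I → Q) where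
  carrier := {f | (mulSupport f).Finite}
  mul_mem' := fun hf hg => ((hf.union hg).subset (mulSupport_mul _ _))
  one_mem' := by simp [Set.mem_setOf_eq, mulSupport_one]
  inv_mem' := fun hf => by simpa [Set.mem_setOf_eq, mulSupport_inv] using hf

/-- The shift by one on `⊕_{n ∈ ℤ} Q` : `(s f) n = f (n - 1)`. -/
def shiftAut (Q : Type*) [Group Q] :
    restrictedProd ℤ Q ≃* restrictedProd ℤ Q where
  toFun f := ⟨fun n => (f : ℤ → Q) (n - 1), by
    have : (mulSupport fun n => (f : ℤ → Q) (n - 1)) ⊆ (fun n : ℤ => n + 1) '' mulSupport (f : ℤ → Q) := by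
      intro n hn
      exact ⟨n - 1, hn, by ring⟩
    exact (f.2.image _).subset this⟩
  invFun f := ⟨fun n => (f : ℤ → Q) (n + 1), by
    have : (mulSupport fun n => (f : ℤ → Q) (n + 1)) ⊆ (fun n : ℤ => n - 1) '' mulSupport (f : ℤ → Q) := by
      intro n hn
      exact ⟨n + 1, hn, by ring⟩
    exact (f.2.image _).subset this⟩
  left_inv f := by ext n; simp
  right_inv f := by ext n; simp
  map_mul' f g := by ext n; simp

/-- The action of `ℤ` on `⊕_{n ∈ ℤ} Q` by shifting indices: `(k · f)(n) = f (n - k)`. -/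
def shiftHom (Q : Type*) [Group Q] :
    Multiplicative ℤ →* MulAut (restrictedProd ℤ Q) :=
  zpowersHom _ (shiftAut Q)

/-- The subgroup `⊕_{n ≥ 0} Q` of `⊕_{n ∈ ℤ} Q`. -/
def nonnegPart (Q : Type*) [Group Q] : Subgroup (restrictedProd ℤ Q) where
  carrier := {f | ∀ n : ℤ, n < 0 → (f : ℤ → Q) n = 1}
  mul_mem' := fun {f g} hf hg n hn => by
    simp [hf n hn, hg n hn]
  one_mem' := fun n _ => rfl
  inv_mem' := fun {f} hf n hn => by
    simp [hf n hn]

/-! The cosets `p j = t⁻ʲ K`, for `t` the generator of `ℤ`, form a ray in `G ⧸ K` on which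
every `g = a tᵏ` eventually acts as the translation `j ↦ j + k`: indeed `tʲ a t⁻ʲ` is supported
in `[0, ∞)` as soon as `j ≥ -min (supp a)`. A translation by `k` changes the `n`-th partial sum
of `f ∘ p` by at most `2 |k| ‖f‖∞`, so the Cesàro averages of `f ∘ p`, taken to the limit
along a free ultrafilter on `ℕ`, form a `G`-invariant mean on `ℓ∞(G ⧸ K)`. -/

open Filter Topology Finset

lemma abs_sub_le_mul_natAbs_of_abs_succ_sub_le {a : ℤ → ℝ} {D : ℝ}
    (h : ∀ m, |a (m + 1) - a m| ≤ D) (k : ℤ) : |a k - a 0| ≤ D * k.natAbs := by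
  induction k using Int.induction_on with
  | zero => simp
  | succ i ih =>
    calc |a (i + 1) - a 0| ≤ |a (i + 1) - a i| + |a i - a 0| := abs_sub_le _ _ _
      _ ≤ D + D * (i : ℤ).natAbs := add_le_add (h i) ih
      _ = D * ((i : ℤ) + 1).natAbs := by
        rw [show ((i : ℤ) + 1).natAbs = i + 1 by omega, Int.natAbs_natCast]; push_cast; ring
  | pred i ih =>
    calc |a (-i - 1) - a 0| ≤ |a (-i) - a (-i - 1)| + |a (-i) - a 0| := by
          rw [abs_sub_comm (a (-i))]; exact abs_sub_le _ _ _
      _ ≤ D + D * (-(i : ℤ)).natAbs := add_le_add (by simpa using h (-i - 1)) ih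
      _ = D * (-(i : ℤ) - 1).natAbs := by
        rw [show (-(i : ℤ) - 1).natAbs = i + 1 by omega, show (-(i : ℤ)).natAbs = i by omega]
        push_cast; ring

lemma sum_range_shift_sub_mem_bddFns {F : ℤ → ℝ} (hF : F ∈ BddFns ℤ) (k : ℤ) :
    (fun n : ℕ => ∑ j ∈ range n, (F (j + k) - F j)) ∈ BddFns ℕ := by
  obtain ⟨C, hC⟩ := hF
  refine ⟨2 * C * k.natAbs, fun n => ?_⟩
  have step (m : ℤ) : ∑ j ∈ range n, F (j + (m + 1)) - ∑ j ∈ range n, F (j + m) =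
      F (n + m) - F m := by
    have h₁ := sum_range_succ' (fun j : ℕ => F (j + m)) n
    have h₂ := sum_range_succ (fun j : ℕ => F (j + m)) n
    simp only [Nat.cast_add, Nat.cast_one, Nat.cast_zero, zero_add, add_assoc,
      add_comm (1 : ℤ)] at h₁
    linarith
  simpa [sum_sub_distrib] using
    abs_sub_le_mul_natAbs_of_abs_succ_sub_le (a := fun m => ∑ j ∈ range n, F (j + m))
      (fun m => by
        rw [step, two_mul]
        exact (abs_sub _ _).trans (add_le_add (hC _) (hC _))) k

lemma sum_range_mem_bddFns_of_eventually_eq_zero {d : ℕ → ℝ} (hd : ∀ᶠ j in atTop, d j = 0) :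
    (fun n => ∑ j ∈ range n, d j) ∈ BddFns ℕ := by
  obtain ⟨N, hN⟩ := eventually_atTop.1 hd
  refine ⟨∑ j ∈ range N, |d j|, fun n => ?_⟩
  dsimp only
  rcases le_total n N with hn | hn
  · exact (abs_sum_le_sum_abs _ _).trans
      (sum_le_sum_of_subset_of_nonneg (range_subset_range.mpr hn) fun _ _ _ => abs_nonneg _)
  · rw [eventually_constant_sum hN hn]
    exact abs_sum_le_sum_abs _ _

noncomputable def cesaroAvg (u : ℕ → ℝ) (n : ℕ) : ℝ := (∑ j ∈ range n, u j) / n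

lemma abs_cesaroAvg_le {u : ℕ → ℝ} {C : ℝ} (hu : ∀ j, |u j| ≤ C) (n : ℕ) :
    |cesaroAvg u n| ≤ C := by
  rcases n.eq_zero_or_pos with rfl | hn
  · simpa [cesaroAvg] using (abs_nonneg _).trans (hu 0)
  · rw [cesaroAvg, abs_div, Nat.abs_cast, div_le_iff₀ (by positivity), mul_comm]
    simpa using (abs_sum_le_sum_abs _ _).trans (sum_le_card_nsmul (range n) _ _ fun j _ => hu j)

lemma tendsto_cesaroAvg_zero_of_sum_range_mem_bddFns {u : ℕ → ℝ}
    (hu : (fun n => ∑ j ∈ range n, u j) ∈ BddFns ℕ) : Tendsto (cesaroAvg u) atTop (𝓝 0) := by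
  obtain ⟨C, hC⟩ := hu
  refine squeeze_zero_norm (fun n => ?_) (tendsto_const_div_atTop_nhds_zero_nat C)
  rw [Real.norm_eq_abs, cesaroAvg, abs_div, Nat.abs_cast]
  exact div_le_div_of_nonneg_right (hC n) n.cast_nonneg

namespace BddFns

def comap {X Y : Type*} (p : Y → X) : BddFns X →ₗ[ℝ] BddFns Y :=
  (LinearMap.funLeft ℝ ℝ p).restrict fun _ ⟨C, hC⟩ => ⟨C, fun y => hC (p y)⟩

@[simp]
lemma coe_comap {X Y : Type*} (p : Y → X) (f : BddFns X) : (comap p f : Y → ℝ) = f ∘ p := rfl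

noncomputable def cesaro : BddFns ℕ →ₗ[ℝ] BddFns ℕ where
  toFun u := ⟨cesaroAvg u, u.2.imp fun _ => abs_cesaroAvg_le⟩
  map_add' u v := by ext n; simp [cesaroAvg, sum_add_distrib, add_div]
  map_smul' c u := by ext n; simp [cesaroAvg, ← mul_sum, mul_div_assoc]

@[simp]
lemma coe_cesaro (u : BddFns ℕ) : (cesaro u : ℕ → ℝ) = cesaroAvg u := rfl

lemma tendsto_limUnder_hyperfilter (u : BddFns ℕ) :
    Tendsto (u : ℕ → ℝ) (hyperfilter ℕ) (𝓝 (limUnder (hyperfilter ℕ) (u : ℕ → ℝ))) := by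
  obtain ⟨C, hC⟩ := u.2
  obtain ⟨x, -, hx⟩ := (isCompact_Icc (a := -C) (b := C)).ultrafilter_le_nhds'
    ((hyperfilter ℕ).map (u : ℕ → ℝ))
    (Ultrafilter.mem_map.2 (univ_mem' fun n => abs_le.mp (hC n)))
  exact tendsto_nhds_limUnder ⟨x, hx⟩

noncomputable def hyperLim : BddFns ℕ →ₗ[ℝ] ℝ where
  toFun u := limUnder (hyperfilter ℕ) (u : ℕ → ℝ)
  map_add' u v :=
    ((tendsto_limUnder_hyperfilter u).add (tendsto_limUnder_hyperfilter v)).limUnder_eq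
  map_smul' c u := ((tendsto_limUnder_hyperfilter u).const_mul c).limUnder_eq

lemma hyperLim_eq_of_tendsto {u : BddFns ℕ} {a : ℝ} (h : Tendsto (u : ℕ → ℝ) atTop (𝓝 a)) :
    hyperLim u = a :=
  (h.mono_left Nat.hyperfilter_le_atTop).limUnder_eq

lemma hyperLim_nonneg {u : BddFns ℕ} (h : ∀ n, 0 ≤ (u : ℕ → ℝ) n) : 0 ≤ hyperLim u :=
  ge_of_tendsto' (tendsto_limUnder_hyperfilter u) h

end BddFns

theorem nonempty_invariantMean_of_eventually_shift {G X : Type*} [Group G] [MulAction G X]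
    (p : ℤ → X) (hp : ∀ g : G, ∃ k : ℤ, ∀ᶠ j : ℕ in atTop, g⁻¹ • p j = p (j + k)) :
    Nonempty (InvariantMean G X) := by
  refine ⟨{ toFun := BddFns.hyperLim ∘ₗ BddFns.cesaro ∘ₗ BddFns.comap (fun j : ℕ => p j)
            norm_one := ?_, nonneg := ?_, invariant := ?_ }⟩
  · refine BddFns.hyperLim_eq_of_tendsto (tendsto_const_nhds.congr' ?_)
    filter_upwards [eventually_ge_atTop 1] with n hn
    simp [cesaroAvg, Nat.one_le_iff_ne_zero.mp hn]
  · exact fun f hf => BddFns.hyperLim_nonneg fun n =>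
      div_nonneg (sum_nonneg fun j _ => hf _) n.cast_nonneg
  · intro g f
    obtain ⟨k, hk⟩ := hp g
    have htail := sum_range_mem_bddFns_of_eventually_eq_zero
      (d := fun j => (f : X → ℝ) (g⁻¹ • p j) - (f : X → ℝ) (p (j + k)))
      (hk.mono fun j hj => by simp [hj])
    have hshift := sum_range_shift_sub_mem_bddFns (BddFns.comap p f).2 k
    rw [← sub_eq_zero, ← map_sub]
    refine BddFns.hyperLim_eq_of_tendsto (tendsto_cesaroAvg_zero_of_sum_range_mem_bddFns ?_)
    convert add_mem htail hshift using 1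
    ext n
    simp [lshift]

lemma SemidirectProduct.inr_mul_mul_inr_inv {N G : Type*} [Group N] [Group G]
    {φ : G →* MulAut N} (g : N ⋊[φ] G) (x : G) :
    inr x * g * inr (x * g.right)⁻¹ = inl (φ x g.left) := by
  calc inr x * g * inr (x * g.right)⁻¹
      = inr x * (inl g.left * inr g.right) * (inr g.right)⁻¹ * (inr x)⁻¹ := by
        rw [inl_left_mul_inr_right, mul_inv_rev, map_mul, map_inv, map_inv, mul_assoc (inr x * g)]
    _ = inr x * inl g.left * (inr x)⁻¹ := by group
    _ = inl (φ x g.left) := by rw [inl_aut, map_inv]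

lemma shiftHom_ofAdd_apply (Q : Type*) [Group Q] (m : ℤ) (a : restrictedProd ℤ Q) (n : ℤ) :
    (shiftHom Q (Multiplicative.ofAdd m) a : ℤ → Q) n = (a : ℤ → Q) (n - m) := by
  change ((shiftAut Q ^ m) a : ℤ → Q) n = _
  induction m using Int.induction_on generalizing a n with
  | zero => simp
  | succ i ih =>
    rw [zpow_add_one, MulAut.mul_apply, ih]
    change (a : ℤ → Q) (n - i - 1) = _
    rw [sub_add_eq_sub_sub]
  | pred i ih =>
    rw [zpow_sub_one, MulAut.mul_apply, ih]
    change (a : ℤ → Q) (n - -i + 1) = _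
    ring_nf

lemma eventually_shiftHom_mem_nonnegPart (Q : Type*) [Group Q] (a : restrictedProd ℤ Q) :
    ∀ᶠ j : ℕ in atTop, shiftHom Q (Multiplicative.ofAdd (j : ℤ)) a ∈ nonnegPart Q := by
  obtain ⟨b, hb⟩ := a.2.bddBelow
  filter_upwards [eventually_ge_atTop (-b).toNat] with j hj n hn
  rw [shiftHom_ofAdd_apply]
  by_contra h
  have := hb h
  omega

/-- In the restricted wreath product `G = Q ≀ ℤ = (⊕_{n ∈ ℤ} Q) ⋊ ℤ`, the subgroup
`K = ⊕_{n ≥ 0} Q` is co-amenable. -/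
theorem wreath_nonnegPart_coamenable (Q : Type*) [Group Q] :
    ((nonnegPart Q).map
      (SemidirectProduct.inl :
        restrictedProd ℤ Q →* restrictedProd ℤ Q ⋊[shiftHom Q] Multiplicative ℤ)).Coamenable := by
  refine nonempty_invariantMean_of_eventually_shift
    (fun j => QuotientGroup.mk (SemidirectProduct.inr (Multiplicative.ofAdd j)⁻¹))
    fun g => ⟨Multiplicative.toAdd g.right, ?_⟩
  filter_upwards [eventually_shiftHom_mem_nonnegPart Q g.left] with j hj
  refine QuotientGroup.eq.2 ?_
  change (g⁻¹ * SemidirectProduct.inr (Multiplicative.ofAdd (j : ℤ))⁻¹)⁻¹ *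
    SemidirectProduct.inr (Multiplicative.ofAdd (j : ℤ) * g.right)⁻¹ ∈ _
  rw [mul_inv_rev, inv_inv, map_inv, inv_inv, SemidirectProduct.inr_mul_mul_inr_inv]
  exact Subgroup.mem_map_of_mem _ hj
end

section
/- Let Q be any group, let K = ⊕_{n≥0} Q be the restricted direct product of copies of Q indexed by the natural numbers, and let K₁ = ⊕_{n≥1} Q be the subgroup of elements whose coordinate at index 0 is trivial. Then K₁ is co-amenable in K if and only if Q is amenable. -/
open Function

/-- The subgroup `K₁ = ⊕_{n ≥ 1} Q` of `K = ⊕_{n ≥ 0} Q` of elements whose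
coordinate at index `0` is trivial. -/
def trivialAtZero (Q : Type*) [Group Q] : Subgroup (restrictedProd ℕ Q) where
  carrier := {f | (f : ℕ → Q) 0 = 1}
  mul_mem' := fun {f g} hf hg => by simp [Set.mem_setOf_eq] at *; simp [hf, hg]
  one_mem' := rfl
  inv_mem' := fun {f} hf => by simp [Set.mem_setOf_eq] at *; simp [hf]

/-!
Evaluation at the coordinate `0` is a surjective homomorphism `⊕_{n≥0} Q → Q` with kernel
`⊕_{n≥1} Q`, so the coset space of `K₁` is `Q` with `K` acting through this quotient map.
Precomposing bounded functions with an equivariant bijection transports invariant means in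
both directions.
-/

def BddFns.comap_s14 {X Y : Type*} (e : X → Y) : BddFns Y →ₗ[ℝ] BddFns X where
  toFun f := ⟨(f : Y → ℝ) ∘ e, by
    obtain ⟨C, hC⟩ := f.2
    exact ⟨C, fun x => hC (e x)⟩⟩
  map_add' _ _ := rfl
  map_smul' _ _ := rfl

namespace InvariantMean

variable {G H X Y : Type*} [Group G] [Group H] [MulAction G X] [MulAction H Y]

def map (m : InvariantMean G X) (e : X → Y)
    (he : ∀ h : H, ∃ g : G, ∀ x, e (g • x) = h • e x) : InvariantMean H Y where
  toFun := m.toFun ∘ₗ BddFns.comap_s14 e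
  norm_one := m.norm_one
  nonneg f hf := m.nonneg _ fun x => hf (e x)
  invariant h f := by
    obtain ⟨g, hg⟩ := he h⁻¹
    have hshift : BddFns.comap_s14 e ⟨lshift h f, lshift_mem h f.2⟩ =
        ⟨lshift g⁻¹ (BddFns.comap_s14 e f : X → ℝ), lshift_mem g⁻¹ (BddFns.comap_s14 e f).2⟩ :=
      Subtype.ext <| funext fun x => by
        simp only [BddFns.comap_s14, LinearMap.coe_mk, AddHom.coe_mk, lshift, comp_apply, inv_inv, hg]
    rw [LinearMap.comp_apply, hshift]
    exact m.invariant g⁻¹ _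

end InvariantMean

theorem MonoidHom.ker_coamenable_iff {G H : Type*} [Group G] [Group H] (φ : G →* H)
    (hφ : Surjective φ) : φ.ker.Coamenable ↔ AmenableGroup H := by
  let e : G ⧸ φ.ker ≃ H := (QuotientGroup.quotientKerEquivOfSurjective φ hφ).toEquiv
  have he : ∀ (g : G) (x : G ⧸ φ.ker), e (g • x) = φ g • e x := by
    intro g x
    induction x using QuotientGroup.induction_on with
    | H a => exact map_mul φ g a
  constructor
  · rintro ⟨m⟩
    refine ⟨m.map e fun h => ?_⟩
    obtain ⟨g, rfl⟩ := hφ h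
    exact ⟨g, he g⟩
  · rintro ⟨m⟩
    refine ⟨m.map e.symm fun g => ⟨φ g, fun y => e.injective ?_⟩⟩
    rw [he, e.apply_symm_apply, e.apply_symm_apply]

def restrictedProd.eval {I : Type*} (Q : Type*) [Group Q] (i : I) : restrictedProd I Q →* Q :=
  (Pi.evalMonoidHom (fun _ => Q) i).comp (restrictedProd I Q).subtype

theorem restrictedProd.eval_surjective {I : Type*} (Q : Type*) [Group Q] (i : I) :
    Surjective (restrictedProd.eval Q i) := by
  classical
  intro q
  exact ⟨⟨Pi.mulSingle i q, (Set.finite_singleton i).subset Pi.mulSupport_mulSingle_subset⟩,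
    Pi.mulSingle_eq_same (M := fun _ => Q) i q⟩

theorem trivialAtZero_eq_ker (Q : Type*) [Group Q] :
    trivialAtZero Q = (restrictedProd.eval Q 0).ker :=
  rfl

/-- `K₁ = ⊕_{n ≥ 1} Q` is co-amenable in `K = ⊕_{n ≥ 0} Q` iff `Q` is amenable. -/
theorem trivialAtZero_coamenable_iff (Q : Type*) [Group Q] :
    (trivialAtZero Q).Coamenable ↔ AmenableGroup Q := by
  rw [trivialAtZero_eq_ker]
  exact (restrictedProd.eval Q 0).ker_coamenable_iff (restrictedProd.eval_surjective Q 0)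
end
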